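/- If two pairs [p¹, z¹] and [p², z²] in V × V both solve the time-discrete variational system (TD)_τ with the same data, and the step size satisfies τ < τ₁ (the smallness condition ensuring τ·C·(|λ°| + |ω°| + 1) < 1/8 and τ·C·(|b°| + |ω°| + 1) < 1/8), then p¹ = p² and z¹ = z² in V. -/
import Mathlib


open scoped RealInnerProductSpace

/-- Uniqueness for the time-discrete variational system (TD)_τ (abstract form): `V` is a
Hilbert space (modeling `H¹(Ω)`) with `‖v‖_V² = ‖ιv‖_H² + ‖Gv‖²` (`ι` the inclusion into
`H = L²(Ω)`, `G` the gradient), and `CV` is the embedding constant of `V ↪ L⁴(Ω)`.  The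
bilinear forms `Blam, Bb, Ba, BA, Bom, Bom'` abstract the terms `∫λ°pφ`, `∫b°zψ`,
`∫a°(z−z†)ψ`, `(A°∇z,∇ψ)`, `(ω°·∇z,φ)`, `(pω°,∇ψ)`, with the bounds, coercivity
(`a° ≥ δ_a`, `A°` positive) coming from the structural assumptions.  If the step size
satisfies the smallness conditions `τ·((CV²+1)/(1∧μ²))(λ̄+ω̄+1) < 1/8` and
`τ·((CV²+1)/(1∧δ_a∧ν²))(b̄+ω̄+1) < 1/8`, then two solutions `[p¹,z¹]`, `[p²,z²]` of the
system (TD)_τ with the same data coincide. -/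
theorem discrete_system_uniqueness
    (V W H : Type*)
    [NormedAddCommGroup V] [InnerProductSpace ℝ V] [CompleteSpace V]
    [NormedAddCommGroup W] [InnerProductSpace ℝ W] [CompleteSpace W]
    [NormedAddCommGroup H] [InnerProductSpace ℝ H] [CompleteSpace H]
    (ι : V →L[ℝ] H) (G : V →L[ℝ] W)
    (hnorm : ∀ v : V, ‖v‖ ^ 2 = ‖ι v‖ ^ 2 + ‖G v‖ ^ 2)
    (CV δa μ ν τ lam bb om : ℝ)
    (hC : 0 < CV) (hδ : 0 < δa) (hμ : 0 < μ) (hν : 0 < ν) (hτ : 0 < τ)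
    (hlam : 0 ≤ lam) (hbb : 0 ≤ bb) (hom : 0 ≤ om)
    (hsmall1 : τ * ((CV ^ 2 + 1) / min 1 (μ ^ 2)) * (lam + om + 1) < 1 / 8)
    (hsmall2 : τ * ((CV ^ 2 + 1) / min 1 (min δa (ν ^ 2))) * (bb + om + 1) < 1 / 8)
    (Blam Bb Ba BA Bom Bom' : V →ₗ[ℝ] V →ₗ[ℝ] ℝ)
    (hBlam : ∀ u v : V, |Blam u v| ≤ CV ^ 2 * lam * ‖u‖ * ‖v‖)
    (hBb : ∀ u v : V, |Bb u v| ≤ CV ^ 2 * bb * ‖u‖ * ‖v‖)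
    (hBa : ∀ u : V, δa * ‖ι u‖ ^ 2 ≤ Ba u u)
    (hBA : ∀ u : V, 0 ≤ BA u u)
    (hBom : ∀ z φ : V, |Bom z φ| ≤ om * ‖G z‖ * ‖ι φ‖)
    (hBom' : ∀ p ψ : V, |Bom' p ψ| ≤ om * ‖ι p‖ * ‖G ψ‖)
    -- the fixed data: previous time-step `[p†,z†]`, fixed functionals and forcings
    (pd zd : V) (lxi lc h k : V →ₗ[ℝ] ℝ)
    (p₁ z₁ p₂ z₂ : V)
    -- first equation of (TD)_τ for both solutions
    (heq1₁ : ∀ φ : V, (1 / τ) * ⟪ι (p₁ - pd), ι φ⟫ + Blam p₁ φ + lxi φ + Bom z₁ φ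
      + ⟪G p₁, G φ⟫ + (μ ^ 2 / τ) * ⟪G (p₁ - pd), G φ⟫ = h φ)
    (heq1₂ : ∀ φ : V, (1 / τ) * ⟪ι (p₂ - pd), ι φ⟫ + Blam p₂ φ + lxi φ + Bom z₂ φ
      + ⟪G p₂, G φ⟫ + (μ ^ 2 / τ) * ⟪G (p₂ - pd), G φ⟫ = h φ)
    -- second equation of (TD)_τ for both solutions
    (heq2₁ : ∀ ψ : V, (1 / τ) * Ba (z₁ - zd) ψ + Bb z₁ ψ + lc ψ + BA z₁ ψ + Bom' p₁ ψ
      + (ν ^ 2 / τ) * ⟪G (z₁ - zd), G ψ⟫ = k ψ)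
    (heq2₂ : ∀ ψ : V, (1 / τ) * Ba (z₂ - zd) ψ + Bb z₂ ψ + lc ψ + BA z₂ ψ + Bom' p₂ ψ
      + (ν ^ 2 / τ) * ⟪G (z₂ - zd), G ψ⟫ = k ψ) :
    p₁ = p₂ ∧ z₁ = z₂ := by
  set p := p₁ - p₂ with hpdef
  set z := z₁ - z₂ with hzdef
  have hp1 : p₁ = p + p₂ := by rw [hpdef]; abel
  have hz1 : z₁ = z + z₂ := by rw [hzdef]; abel
  have E1 : (1/τ) * ⟪ι p, ι p⟫ + Blam p p + Bom z p + ⟪G p, G p⟫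
      + (μ^2/τ) * ⟪G p, G p⟫ = 0 := by
    have h1 := heq1₁ p
    have h2 := heq1₂ p
    rw [hp1, hz1, show p + p₂ - pd = p + (p₂ - pd) by abel] at h1
    simp only [map_add, LinearMap.add_apply, inner_add_left] at h1
    linarith
  have E2 : (1/τ) * Ba z z + Bb z z + BA z z + Bom' p z
      + (ν^2/τ) * ⟪G z, G z⟫ = 0 := by
    have h1 := heq2₁ z
    have h2 := heq2₂ z
    rw [hp1, hz1, show z + z₂ - zd = z + (z₂ - zd) by abel] at h1
    simp only [map_add, LinearMap.add_apply, inner_add_left] at h1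
    linarith
  rw [real_inner_self_eq_norm_sq, real_inner_self_eq_norm_sq] at E1
  rw [real_inner_self_eq_norm_sq] at E2
  set s := 1/τ with hsdef
  rw [show μ^2/τ = μ^2 * s by rw [hsdef]; ring] at E1
  rw [show ν^2/τ = ν^2 * s by rw [hsdef]; ring] at E2
  have hs : 0 < s := by rw [hsdef]; positivity
  set a := ‖ι p‖
  set b := ‖G p‖
  set c := ‖ι z‖
  set d := ‖G z‖
  have ha0 : 0 ≤ a := norm_nonneg _
  have hb0 : 0 ≤ b := norm_nonneg _
  have hc0 : 0 ≤ c := norm_nonneg _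
  have hd0 : 0 ≤ d := norm_nonneg _
  have hP0 : 0 ≤ ‖p‖ := norm_nonneg _
  have hZ0 : 0 ≤ ‖z‖ := norm_nonneg _
  have hPn : ‖p‖^2 = a^2 + b^2 := hnorm p
  have hZn : ‖z‖^2 = c^2 + d^2 := hnorm z
  set m₁ := min 1 (μ^2) with hm1def
  set m₂ := min 1 (min δa (ν^2)) with hm2def
  have hm₁ : 0 < m₁ := lt_min one_pos (by positivity)
  have hm₂ : 0 < m₂ := lt_min one_pos (lt_min hδ (by positivity))
  have hm₁1 : m₁ ≤ 1 := min_le_left _ _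
  have hm₁μ : m₁ ≤ μ^2 := min_le_right _ _
  have hm₂1 : m₂ ≤ 1 := min_le_left _ _
  have hm₂δ : m₂ ≤ δa := le_trans (min_le_right _ _) (min_le_left _ _)
  have hm₂ν : m₂ ≤ ν^2 := le_trans (min_le_right _ _) (min_le_right _ _)
  -- smallness in multiplied form
  have key1 : 8 * (τ * ((CV^2 + 1) * (lam + om + 1))) < m₁ := by
    rw [show τ * ((CV^2+1)/m₁) * (lam+om+1)
        = (τ * ((CV^2+1) * (lam+om+1))) / m₁ by ring,
      div_lt_iff₀ hm₁] at hsmall1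
    linarith
  have key2 : 8 * (τ * ((CV^2 + 1) * (bb + om + 1))) < m₂ := by
    rw [show τ * ((CV^2+1)/m₂) * (bb+om+1)
        = (τ * ((CV^2+1) * (bb+om+1))) / m₂ by ring,
      div_lt_iff₀ hm₂] at hsmall2
    linarith
  have k1 : 8 * ((CV^2+1)*(lam+om+1)) < m₁ * s := by
    rw [hsdef, mul_one_div, lt_div_iff₀ hτ]; linarith
  have k2 : 8 * ((CV^2+1)*(bb+om+1)) < m₂ * s := by
    rw [hsdef, mul_one_div, lt_div_iff₀ hτ]; linarith
  have kk1 : 8 * (CV^2*lam + om) + 8 ≤ m₁ * s := by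
    linarith [k1, mul_nonneg (sq_nonneg CV) hom, sq_nonneg CV, hlam]
  have kk2 : 8 * (CV^2*bb + om) + 8 ≤ m₂ * s := by
    linarith [k2, mul_nonneg (sq_nonneg CV) hom, sq_nonneg CV, hbb]
  -- bounds on bilinear terms
  have hB1 := neg_abs_le (Blam p p)
  have hB1' := hBlam p p
  have hB2 := neg_abs_le (Bom z p)
  have hB2' := hBom z p
  have hB3 := neg_abs_le (Bb z z)
  have hB3' := hBb z z
  have hB4 := neg_abs_le (Bom' p z)
  have hB4' := hBom' p z
  have hBa' := hBa z
  have hBA' := hBA z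
  -- energy inequalities
  have I1 : s * a^2 + μ^2 * s * b^2 ≤ CV^2 * lam * ‖p‖ * ‖p‖ + om * d * a := by
    linarith [sq_nonneg b]
  have I2 : s * (δa * c^2) + ν^2 * s * d^2 ≤ CV^2 * bb * ‖z‖ * ‖z‖ + om * a * d := by
    have := mul_le_mul_of_nonneg_left hBa' hs.le
    linarith
  have hcross : 2 * (a * d) ≤ ‖p‖^2 + ‖z‖^2 := by
    linarith [sq_nonneg (a - d), sq_nonneg b, sq_nonneg c, hPn, hZn]
  have habs1 : s * (m₁ * ‖p‖^2) ≤ s * (a^2 + μ^2 * b^2) :=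
    mul_le_mul_of_nonneg_left (by
      linarith [mul_le_mul_of_nonneg_right hm₁1 (sq_nonneg a),
        mul_le_mul_of_nonneg_right hm₁μ (sq_nonneg b),
        show m₁ * ‖p‖^2 = m₁ * a^2 + m₁ * b^2 by rw [hPn]; ring]) hs.le
  have habs2 : s * (m₂ * ‖z‖^2) ≤ s * (δa * c^2 + ν^2 * d^2) :=
    mul_le_mul_of_nonneg_left (by
      linarith [mul_le_mul_of_nonneg_right hm₂δ (sq_nonneg c),
        mul_le_mul_of_nonneg_right hm₂ν (sq_nonneg d),
        show m₂ * ‖z‖^2 = m₂ * c^2 + m₂ * d^2 by rw [hZn]; ring]) hs.le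
  have hcr := mul_le_mul_of_nonneg_left hcross hom
  have step : m₁ * s * ‖p‖^2 + m₂ * s * ‖z‖^2
      ≤ (CV^2*lam + om) * ‖p‖^2 + (CV^2*bb + om) * ‖z‖^2 := by
    linarith [habs1, habs2, I1, I2, hcr]
  have hX1 : 0 ≤ (CV^2*lam + om) * ‖p‖^2 :=
    mul_nonneg (add_nonneg (mul_nonneg (sq_nonneg CV) hlam) hom) (sq_nonneg _)
  have hX2 : 0 ≤ (CV^2*bb + om) * ‖z‖^2 :=
    mul_nonneg (add_nonneg (mul_nonneg (sq_nonneg CV) hbb) hom) (sq_nonneg _)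
  have final : ‖p‖^2 + ‖z‖^2 ≤ 0 := by
    linarith [step, mul_le_mul_of_nonneg_right kk1 (sq_nonneg ‖p‖),
      mul_le_mul_of_nonneg_right kk2 (sq_nonneg ‖z‖), hX1, hX2]
  have hp0 : p = 0 := by
    have h2 : ‖p‖^2 = 0 := le_antisymm (by linarith [final, sq_nonneg ‖z‖]) (sq_nonneg _)
    exact norm_eq_zero.mp (pow_eq_zero_iff two_ne_zero |>.mp h2)
  have hz0 : z = 0 := by
    have h2 : ‖z‖^2 = 0 := le_antisymm (by linarith [final, sq_nonneg ‖p‖]) (sq_nonneg _)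
    exact norm_eq_zero.mp (pow_eq_zero_iff two_ne_zero |>.mp h2)
  rw [hpdef] at hp0
  rw [hzdef] at hz0
  exact ⟨sub_eq_zero.mp hp0, sub_eq_zero.mp hz0⟩
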